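/- arXiv:2601.03841 — 3 statements merged into one kernel-verified Lean document; each statement's English description precedes it below -/
import Mathlib

section
/- Let M be a ground head atom, 𝓘 = (I₁,I₂) a three-valued interpretation, and t ∈ 𝕋. Then ⟦M⟧_𝓘(t) equals the ≤τ-infimum of the set {⟦N⟧_𝓘(t') : (N,t') ∈ F(M,t)}. -/
/- DatalogMTL with negation: common definitions.
   The timeline `T` is an arbitrary linearly ordered additive commutative group
   (covering both ℤ and ℚ); `A` is the type of ground relational atoms. -/

namespace DatalogMTL

/-- An interval on the timeline: a nonempty convex subset whose infimum and
supremum lie in `T ∪ {−∞, +∞}` (i.e. if bounded below/above, a greatest lower /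
least upper bound exists in `T`). -/
structure TInterval (T : Type*) [AddCommGroup T] [LinearOrder T] [IsOrderedAddMonoid T] where
  carrier : Set T
  nonempty : carrier.Nonempty
  convex : ∀ ⦃t₁ t₂ t : T⦄, t₁ ∈ carrier → t₂ ∈ carrier → t₁ < t → t < t₂ → t ∈ carrier
  exists_glb : BddBelow carrier → ∃ a, IsGLB carrier a
  exists_lub : BddAbove carrier → ∃ b, IsLUB carrier b

/-- A non-negative interval. -/
def TInterval.Nonneg {T : Type*} [AddCommGroup T] [LinearOrder T] [IsOrderedAddMonoid T] (δ : TInterval T) : Prop :=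
  ∀ t ∈ δ.carrier, 0 ≤ t

/-- The type of non-negative intervals. -/
abbrev NNInterval (T : Type*) [AddCommGroup T] [LinearOrder T] [IsOrderedAddMonoid T] :=
  {δ : TInterval T // δ.Nonneg}

/-- A (two-valued) interpretation assigns to each timepoint a set of ground
relational atoms; the order is pointwise inclusion. -/
abbrev Interp (T A : Type*) := T → Set A

/-- Ground metric atoms. -/
inductive MetricAtom (T : Type*) [AddCommGroup T] [LinearOrder T] [IsOrderedAddMonoid T] (A : Type*) where
  | top
  | bot
  | rel (a : A)
  | dMinus (δ : NNInterval T) (M : MetricAtom T A)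
  | dPlus (δ : NNInterval T) (M : MetricAtom T A)
  | boxMinus (δ : NNInterval T) (M : MetricAtom T A)
  | boxPlus (δ : NNInterval T) (M : MetricAtom T A)
  | sSince (δ : NNInterval T) (M₁ M₂ : MetricAtom T A)
  | sUntil (δ : NNInterval T) (M₁ M₂ : MetricAtom T A)

/-- Ground head atoms: `⊤ | P(s) | ⊟_δ M | ⊞_δ M`. -/
inductive HeadAtom (T : Type*) [AddCommGroup T] [LinearOrder T] [IsOrderedAddMonoid T] (A : Type*) where
  | top
  | rel (a : A)
  | boxMinus (δ : NNInterval T) (M : HeadAtom T A)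
  | boxPlus (δ : NNInterval T) (M : HeadAtom T A)

variable {T A : Type*} [AddCommGroup T] [LinearOrder T] [IsOrderedAddMonoid T]

/-- Head atoms are metric atoms. -/
def HeadAtom.toMetric : HeadAtom T A → MetricAtom T A
  | .top => .top
  | .rel a => .rel a
  | .boxMinus δ M => .boxMinus δ M.toMetric
  | .boxPlus δ M => .boxPlus δ M.toMetric

/-- Two-valued semantics: `sat I M t` holds iff `⟦M⟧_I(t) = true`
(the truth order `false ≤τ true` is implication). -/
def sat (I : Interp T A) : MetricAtom T A → T → Prop
  | .top, _ => True
  | .bot, _ => False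
  | .rel a, t => a ∈ I t
  | .dMinus δ M, t => ∃ t', t - t' ∈ δ.1.carrier ∧ sat I M t'
  | .dPlus δ M, t => ∃ t', t' - t ∈ δ.1.carrier ∧ sat I M t'
  | .boxMinus δ M, t => ∀ t', t - t' ∈ δ.1.carrier → sat I M t'
  | .boxPlus δ M, t => ∀ t', t' - t ∈ δ.1.carrier → sat I M t'
  | .sSince δ M₁ M₂, t =>
      ∃ t', t - t' ∈ δ.1.carrier ∧ sat I M₂ t' ∧ ∀ t'', t' < t'' → t'' < t → sat I M₁ t''
  | .sUntil δ M₁ M₂, t =>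
      ∃ t', t' - t ∈ δ.1.carrier ∧ sat I M₂ t' ∧ ∀ t'', t < t'' → t'' < t' → sat I M₁ t''

/-- A ground rule body `M₁ ∧ … ∧ M_k ∧ not M_{k+1} ∧ … ∧ not M_m`. -/
structure Body (T : Type*) [AddCommGroup T] [LinearOrder T] [IsOrderedAddMonoid T] (A : Type*) where
  pos : List (MetricAtom T A)
  neg : List (MetricAtom T A)

/-- Two-valued evaluation of a body: the `≤τ`-infimum (conjunction) of its literals. -/
def Body.holds (B : Body T A) (I : Interp T A) (t : T) : Prop :=
  (∀ M ∈ B.pos, sat I M t) ∧ (∀ M ∈ B.neg, ¬ sat I M t)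

/-- A ground rule `M ← B`. -/
structure Rule (T : Type*) [AddCommGroup T] [LinearOrder T] [IsOrderedAddMonoid T] (A : Type*) where
  head : HeadAtom T A
  body : Body T A

/-- A program, represented by its grounding `ground(Π)`: a set of ground rules. -/
abbrev Program (T : Type*) [AddCommGroup T] [LinearOrder T] [IsOrderedAddMonoid T] (A : Type*) := Set (Rule T A)

/-- The function `F` linking a ground head atom to the (atom, timepoint) pairs it refers to. -/
def F : HeadAtom T A → T → Set (HeadAtom T A × T)
  | .boxMinus δ M, t => ⋃ t' ∈ {s : T | t - s ∈ δ.1.carrier}, F M t'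
  | .boxPlus δ M, t => ⋃ t' ∈ {s : T | s - t ∈ δ.1.carrier}, F M t'
  | .top, t => {(.top, t)}
  | .rel a, t => {(.rel a, t)}

/-- A dataset: a finite set of relational facts `P(s)@δ`. -/
structure Dataset (T : Type*) [AddCommGroup T] [LinearOrder T] [IsOrderedAddMonoid T] (A : Type*) where
  facts : Set (A × TInterval T)
  finite : facts.Finite

/-- `I` is a model of the dataset `D`. -/
def Interp.modelOfDataset (I : Interp T A) (D : Dataset T A) : Prop :=
  ∀ a δ, (a, δ) ∈ D.facts → ∀ t ∈ δ.carrier, a ∈ I t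

/-- `I` is a two-valued model of `D` and `Π`. -/
def IsTwoValModel (I : Interp T A) (D : Dataset T A) (P : Program T A) : Prop :=
  I.modelOfDataset D ∧ ∀ r ∈ P, ∀ t : T, r.body.holds I t → sat I r.head.toMetric t

/- Three-valued truth values are identified with consistent pairs of (Prop-valued)
truth values: `true = (True, True)`, `undef = (False, True)`, `false = (False, False)`.
The truth order `false ≤τ undef ≤τ true` is the componentwise order. -/

/-- The three-valued value of a ground metric atom in `𝓘 = (I₁, I₂)`. -/
def tv3 (I₁ I₂ : Interp T A) (M : MetricAtom T A) (t : T) : Prop × Prop :=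
  (sat I₁ M t, sat I₂ M t)

/-- The three-valued value of a negated ground metric atom `not M` in `𝓘 = (I₁, I₂)`:
the inverse `(·)⁻¹` of the value of `M`. -/
def tv3Not (I₁ I₂ : Interp T A) (M : MetricAtom T A) (t : T) : Prop × Prop :=
  (¬ sat I₂ M t, ¬ sat I₁ M t)

/-- Three-valued evaluation of a body: the `≤τ`-infimum of the values of its literals. -/
def Body.holds3 (B : Body T A) (I₁ I₂ : Interp T A) (t : T) : Prop × Prop :=
  ((∀ M ∈ B.pos, sat I₁ M t) ∧ (∀ M ∈ B.neg, ¬ sat I₂ M t),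
   (∀ M ∈ B.pos, sat I₂ M t) ∧ (∀ M ∈ B.neg, ¬ sat I₁ M t))

/-- The truth order `≤τ` on (pair-encoded) truth values. -/
def tauLE (u v : Prop × Prop) : Prop := (u.1 → v.1) ∧ (u.2 → v.2)

/-- The precision order `≤p` on (pair-encoded) truth values: `undef ≤p false`, `undef ≤p true`. -/
def precLE (u v : Prop × Prop) : Prop := (u.1 → v.1) ∧ (v.2 → u.2)

/-- A truth value equals `true = (True, True)`. -/
def tvIsTrue (v : Prop × Prop) : Prop := v.1 ∧ v.2

/-- A truth value differs from `false = (False, False)`. -/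
def tvNotFalse (v : Prop × Prop) : Prop := v.1 ∨ v.2

/-- The `≤τ`-infimum of a set of (pair-encoded) truth values. -/
def tvInf (S : Set (Prop × Prop)) : Prop × Prop := (∀ v ∈ S, v.1, ∀ v ∈ S, v.2)

/-- `(I₁, I₂)` is a three-valued model of the program `Π`. -/
def IsThreeValModelOfProgram (I₁ I₂ : Interp T A) (P : Program T A) : Prop :=
  ∀ r ∈ P, ∀ t : T, tauLE (r.body.holds3 I₁ I₂ t) (tv3 I₁ I₂ r.head.toMetric t)

/-- `(I₁, I₂)` is a three-valued model of `D` and `Π`. -/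
def IsThreeValModel (I₁ I₂ : Interp T A) (D : Dataset T A) (P : Program T A) : Prop :=
  IsThreeValModelOfProgram I₁ I₂ P ∧ I₁.modelOfDataset D

/-- The atoms holding at `t` by virtue of the dataset alone. -/
def dataFacts (D : Dataset T A) (t : T) : Set A :=
  {a | ∃ δ : TInterval T, (a, δ) ∈ D.facts ∧ t ∈ δ.carrier}

/-- The immediate consequence operator `T_{𝒟,Π}`. -/
def Tds (D : Dataset T A) (P : Program T A) (I : Interp T A) : Interp T A := fun t =>
  dataFacts D t ∪
    {a | ∃ r ∈ P, ∃ t' : T, r.body.holds I t' ∧ (HeadAtom.rel a, t) ∈ F r.head t'}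

/-- The first component `A¹_{𝒟,Π}` of the three-valued immediate consequence operator. -/
def A1 (D : Dataset T A) (P : Program T A) (I₁ I₂ : Interp T A) : Interp T A := fun t =>
  dataFacts D t ∪
    {a | ∃ r ∈ P, ∃ t' : T, tvIsTrue (r.body.holds3 I₁ I₂ t') ∧ (HeadAtom.rel a, t) ∈ F r.head t'}

/-- The second component `A²_{𝒟,Π}` of the three-valued immediate consequence operator. -/
def A2 (D : Dataset T A) (P : Program T A) (I₁ I₂ : Interp T A) : Interp T A := fun t =>
  dataFacts D t ∪
    {a | ∃ r ∈ P, ∃ t' : T, tvNotFalse (r.body.holds3 I₁ I₂ t') ∧ (HeadAtom.rel a, t) ∈ F r.head t'}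

/-- `(I₁, I₂)` is an HT-model of `D` and `Π` (Definition of Wałęga et al.). -/
def IsHTModel (D : Dataset T A) (P : Program T A) (I₁ I₂ : Interp T A) : Prop :=
  I₁.modelOfDataset D ∧ ∀ r ∈ P, ∀ t : T,
    (((∀ M ∈ r.body.pos, sat I₁ M t) ∧ (∀ M ∈ r.body.neg, ¬ sat I₂ M t)) →
        sat I₁ r.head.toMetric t) ∧
    (((∀ M ∈ r.body.pos, sat I₂ M t) ∧ (∀ M ∈ r.body.neg, ¬ sat I₂ M t)) →
        sat I₂ r.head.toMetric t)

/-- `I` is a stable HT-model of `D` and `Π`: `(I,I)` is an HT-model and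
`I = ⊓ {J : (J,I) is an HT-model of D and Π}`. -/
def IsStableHTModel (D : Dataset T A) (P : Program T A) (I : Interp T A) : Prop :=
  IsHTModel D P I I ∧ I = sInf {J : Interp T A | IsHTModel D P J I}

theorem sat_toMetric_iff_forall_mem_F (I : Interp T A) (M : HeadAtom T A) (t : T) :
    sat I M.toMetric t ↔ ∀ N t', (N, t') ∈ F M t → sat I N.toMetric t' := by
  induction M generalizing t with
  | top | rel a => simp [F]
  | boxMinus δ M ih | boxPlus δ M ih =>
    simp only [F, HeadAtom.toMetric, sat, ih, Set.mem_iUnion, Set.mem_ofPred_eq, exists_prop,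
      forall_exists_index, and_imp]
    exact ⟨fun h N t' s hs hN => h s hs N t' hN, fun h s hs N t' hN => h N t' s hs hN⟩

theorem tvInf_setOf_exists_mem {α β : Type*} (S : Set (α × β)) (f : α → β → Prop × Prop) :
    tvInf {v | ∃ a b, (a, b) ∈ S ∧ v = f a b} =
      (∀ a b, (a, b) ∈ S → (f a b).1, ∀ a b, (a, b) ∈ S → (f a b).2) := by
  simp only [tvInf, Set.mem_ofPred_eq, forall_exists_index, and_imp]
  congr 1 <;>
    exact propext ⟨fun h a b hab => h _ a b hab rfl, fun h _ a b hab hv => hv ▸ h a b hab⟩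

end DatalogMTL
theorem statement1_general {T A : Type*} [AddCommGroup T] [LinearOrder T] [IsOrderedAddMonoid T]
    (I₁ I₂ : DatalogMTL.Interp T A)
    (M : DatalogMTL.HeadAtom T A) (t : T) :
    DatalogMTL.tv3 I₁ I₂ M.toMetric t =
      DatalogMTL.tvInf {v | ∃ (N : DatalogMTL.HeadAtom T A) (t' : T),
        (N, t') ∈ DatalogMTL.F M t ∧ v = DatalogMTL.tv3 I₁ I₂ N.toMetric t'} := by
  rw [DatalogMTL.tvInf_setOf_exists_mem, DatalogMTL.tv3,
    DatalogMTL.sat_toMetric_iff_forall_mem_F, DatalogMTL.sat_toMetric_iff_forall_mem_F]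
  rfl

/-- For a ground head atom `M`, a three-valued interpretation
`𝓘 = (I₁, I₂)` and `t ∈ 𝕋`: `⟦M⟧_𝓘(t)` equals the `≤τ`-infimum of the set
`{⟦N⟧_𝓘(t') : (N, t') ∈ F(M, t)}`. -/
theorem statement1 {T A : Type*} [AddCommGroup T] [LinearOrder T] [IsOrderedAddMonoid T]
    (I₁ I₂ : DatalogMTL.Interp T A) (hI : I₁ ≤ I₂)
    (M : DatalogMTL.HeadAtom T A) (t : T) :
    DatalogMTL.tv3 I₁ I₂ M.toMetric t =
      DatalogMTL.tvInf {v | ∃ (N : DatalogMTL.HeadAtom T A) (t' : T),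
        (N, t') ∈ DatalogMTL.F M t ∧ v = DatalogMTL.tv3 I₁ I₂ N.toMetric t'} :=
  statement1_general I₁ I₂ M t
end

section
/- Let Π be a program, 𝒟 a dataset, and 𝓘 = (I₁,I₂) a three-valued interpretation. Then 𝓘 is a three-valued model of 𝒟 and Π if and only if 𝓘 is a pre-fixpoint of the three-valued immediate consequence operator A_{𝒟,Π}, i.e. A¹_{𝒟,Π}(𝓘) ⊆ I₁ and A²_{𝒟,Π}(𝓘) ⊆ I₂. -/
/-!
Both components of `A_{𝒟,Π}` are the dataset facts together with the relational atoms that the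
heads of "firing" rules refer to through `F`, and a head atom holds in an interpretation exactly
when every atom it refers to does. So `A¹(𝓘) ⊆ I₁` says that `I₁` models `𝒟` and satisfies
every head whose body is true, and `A²(𝓘) ⊆ I₂` says the same for `I₂` and bodies that are not
false. Since `I₁ ⊆ I₂`, a body is true iff its first component holds and not false iff its second
component holds, which is exactly the componentwise reading of the three-valued model condition.
-/

namespace DatalogMTL

variable {T A : Type*} [AddCommGroup T] [LinearOrder T] [IsOrderedAddMonoid T]

theorem sat_mono {I J : Interp T A} (hIJ : I ≤ J) {M : MetricAtom T A} {t : T}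
    (hM : sat I M t) : sat J M t := by
  induction M generalizing t with
  | top => trivial
  | bot => exact hM
  | rel a => exact hIJ t hM
  | dMinus δ M ih | dPlus δ M ih =>
    obtain ⟨t', hδ, h⟩ := hM
    exact ⟨t', hδ, ih h⟩
  | boxMinus δ M ih | boxPlus δ M ih => exact fun t' hδ => ih (hM t' hδ)
  | sSince δ M₁ M₂ ih₁ ih₂ | sUntil δ M₁ M₂ ih₁ ih₂ =>
    obtain ⟨t', hδ, h₂, h₁⟩ := hM
    exact ⟨t', hδ, ih₂ h₂, fun t'' h h' => ih₁ (h₁ t'' h h')⟩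

theorem Interp.modelOfDataset.mono {I J : Interp T A} {D : Dataset T A} (hIJ : I ≤ J)
    (hI : I.modelOfDataset D) : J.modelOfDataset D :=
  fun a δ hD t ht => hIJ t (hI a δ hD t ht)

theorem sat_toMetric_iff (I : Interp T A) (M : HeadAtom T A) (t : T) :
    sat I M.toMetric t ↔ ∀ a t', (HeadAtom.rel a, t') ∈ F M t → a ∈ I t' := by
  induction M generalizing t with
  | top => simp [HeadAtom.toMetric, sat, F]
  | rel b => simp [HeadAtom.toMetric, sat, F]
  | boxMinus δ M ih | boxPlus δ M ih =>
    simp only [HeadAtom.toMetric, sat, F, ih, Set.mem_iUnion, exists_prop]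
    exact ⟨fun h a t' ⟨s, hs, hF⟩ => h s hs a t' hF, fun h s hs a t' hF => h a t' ⟨s, hs, hF⟩⟩

def headConsequences (P : Program T A) (fires : Rule T A → T → Prop) : Interp T A := fun t =>
  {a | ∃ r ∈ P, ∃ t', fires r t' ∧ (HeadAtom.rel a, t) ∈ F r.head t'}

theorem headConsequences_le_iff (P : Program T A) (fires : Rule T A → T → Prop)
    (I : Interp T A) :
    headConsequences P fires ≤ I ↔ ∀ r ∈ P, ∀ t, fires r t → sat I r.head.toMetric t := by
  simp only [sat_toMetric_iff]
  exact ⟨fun h r hr t hfires a t' hF => h t' ⟨r, hr, t, hfires, hF⟩,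
    fun h t a ⟨r, hr, t', hfires, hF⟩ => h r hr t' hfires a t hF⟩

theorem dataFacts_le_iff (D : Dataset T A) (I : Interp T A) :
    dataFacts D ≤ I ↔ I.modelOfDataset D :=
  ⟨fun h _ δ hD t ht => h t ⟨δ, hD, ht⟩, fun h _ a ⟨δ, hD, ht⟩ => h a δ hD _ ht⟩

theorem dataFacts_sup_headConsequences_le_iff (D : Dataset T A) (P : Program T A)
    (fires : Rule T A → T → Prop) (I : Interp T A) :
    dataFacts D ⊔ headConsequences P fires ≤ I ↔
      I.modelOfDataset D ∧ ∀ r ∈ P, ∀ t, fires r t → sat I r.head.toMetric t := by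
  rw [sup_le_iff, dataFacts_le_iff, headConsequences_le_iff]

theorem Body.holds3_snd_of_fst (B : Body T A) {I₁ I₂ : Interp T A} (hI : I₁ ≤ I₂) {t : T}
    (hB : (B.holds3 I₁ I₂ t).1) : (B.holds3 I₁ I₂ t).2 :=
  ⟨fun M hM => sat_mono hI (hB.1 M hM), fun M hM h => hB.2 M hM (sat_mono hI h)⟩

theorem A1_le_iff (D : Dataset T A) (P : Program T A) {I₁ I₂ : Interp T A} (hI : I₁ ≤ I₂) :
    A1 D P I₁ I₂ ≤ I₁ ↔ I₁.modelOfDataset D ∧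
      ∀ r ∈ P, ∀ t, (r.body.holds3 I₁ I₂ t).1 → sat I₁ r.head.toMetric t := by
  have hTrue : ∀ (r : Rule T A) t,
      tvIsTrue (r.body.holds3 I₁ I₂ t) ↔ (r.body.holds3 I₁ I₂ t).1 :=
    fun r _ => ⟨And.left, fun h => ⟨h, r.body.holds3_snd_of_fst hI h⟩⟩
  simp only [← hTrue]
  exact dataFacts_sup_headConsequences_le_iff D P _ I₁

theorem A2_le_iff (D : Dataset T A) (P : Program T A) {I₁ I₂ : Interp T A} (hI : I₁ ≤ I₂) :
    A2 D P I₁ I₂ ≤ I₂ ↔ I₂.modelOfDataset D ∧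
      ∀ r ∈ P, ∀ t, (r.body.holds3 I₁ I₂ t).2 → sat I₂ r.head.toMetric t := by
  have hNotFalse : ∀ (r : Rule T A) t,
      tvNotFalse (r.body.holds3 I₁ I₂ t) ↔ (r.body.holds3 I₁ I₂ t).2 :=
    fun r _ => ⟨fun h => h.elim (r.body.holds3_snd_of_fst hI) id, Or.inr⟩
  simp only [← hNotFalse]
  exact dataFacts_sup_headConsequences_le_iff D P _ I₂

end DatalogMTL

/-- A three-valued interpretation `𝓘 = (I₁, I₂)` is a three-valued
model of `D` and `Π` iff it is a pre-fixpoint of the three-valued immediate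
consequence operator, i.e. `A¹_{𝒟,Π}(𝓘) ⊆ I₁` and `A²_{𝒟,Π}(𝓘) ⊆ I₂`. -/
theorem statement4 {T A : Type*} [AddCommGroup T] [LinearOrder T] [IsOrderedAddMonoid T]
    (D : DatalogMTL.Dataset T A) (P : DatalogMTL.Program T A)
    (I₁ I₂ : DatalogMTL.Interp T A) (hI : I₁ ≤ I₂) :
    DatalogMTL.IsThreeValModel I₁ I₂ D P ↔
      (DatalogMTL.A1 D P I₁ I₂ ≤ I₁ ∧ DatalogMTL.A2 D P I₁ I₂ ≤ I₂) := by
  rw [DatalogMTL.A1_le_iff D P hI, DatalogMTL.A2_le_iff D P hI]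
  constructor
  · rintro ⟨hP, hD⟩
    exact ⟨⟨hD, fun r hr t => (hP r hr t).1⟩, ⟨hD.mono hI, fun r hr t => (hP r hr t).2⟩⟩
  · rintro ⟨⟨hD, hP₁⟩, -, hP₂⟩
    exact ⟨fun r hr t => ⟨hP₁ r hr t, hP₂ r hr t⟩, hD⟩
end

section
/- Let 𝒟 be a dataset, Π a program, and I, J two-valued interpretations with I ⊆ J. If (I,J) is an HT-model of 𝒟 and Π, then I is a pre-fixpoint of the operator X ↦ A¹_{𝒟,Π}(X,J), i.e. A¹_{𝒟,Π}(I,J) ⊆ I. -/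
namespace DatalogMTL

variable {T A : Type*} [AddCommGroup T] [LinearOrder T] [IsOrderedAddMonoid T]

theorem HeadAtom.mem_of_sat_toMetric_of_mem_F {I : Interp T A} {M : HeadAtom T A} {t' t : T}
    {a : A} (hsat : sat I M.toMetric t') (hF : (HeadAtom.rel a, t) ∈ F M t') : a ∈ I t := by
  induction M generalizing t' with
  | top => simp [F] at hF
  | rel b =>
    obtain ⟨rfl, rfl⟩ : a = b ∧ t = t' := by simpa [F] using hF
    exact hsat
  | boxMinus δ M ih =>
    simp only [F, Set.mem_iUnion] at hF
    obtain ⟨s, hs, hFs⟩ := hF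
    exact ih (hsat s hs) hFs
  | boxPlus δ M ih =>
    simp only [F, Set.mem_iUnion] at hF
    obtain ⟨s, hs, hFs⟩ := hF
    exact ih (hsat s hs) hFs

end DatalogMTL

theorem statement14_general {T A : Type*} [AddCommGroup T] [LinearOrder T] [IsOrderedAddMonoid T]
    (D : DatalogMTL.Dataset T A) (P : DatalogMTL.Program T A)
    (I J : DatalogMTL.Interp T A)
    (h : DatalogMTL.IsHTModel D P I J) :
    DatalogMTL.A1 D P I J ≤ I := by
  intro t a ha
  rcases ha with ⟨δ, hδ, ht⟩ | ⟨r, hr, t', ⟨hbody, -⟩, hF⟩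
  · exact h.1 a δ hδ t ht
  · exact DatalogMTL.HeadAtom.mem_of_sat_toMetric_of_mem_F ((h.2 r hr t').1 hbody) hF

/-- If `(I, J)` is an HT-model of `D` and `Π` (with `I ⊆ J`), then
`I` is a pre-fixpoint of `X ↦ A¹_{𝒟,Π}(X, J)`, i.e. `A¹_{𝒟,Π}(I, J) ⊆ I`. -/
theorem statement14 {T A : Type*} [AddCommGroup T] [LinearOrder T] [IsOrderedAddMonoid T]
    (D : DatalogMTL.Dataset T A) (P : DatalogMTL.Program T A)
    (I J : DatalogMTL.Interp T A) (hIJ : I ≤ J)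
    (h : DatalogMTL.IsHTModel D P I J) :
    DatalogMTL.A1 D P I J ≤ I :=
  statement14_general D P I J h
end
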